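/- arXiv:1412.5828 — 2 statements merged into one kernel-verified Lean document; each statement's English description precedes it below -/
import Mathlib

section
/- Let (X,d) be a Hilbert geometry with base point o ∈ X. Let a₂, b₂ ∈ X with o, a₂, b₂ not collinear and d(o,a₂) = d(o,b₂). Let [a₁,a₃] and [b₁,b₃] be the chords of X through o, a₂ and through o, b₂ (in these orders). Then the three lines L₁ (through a₁, b₁), L₂ (through a₂, b₂) and L₃ (through a₃, b₃) either meet in a single point of ℝⁿ ∖ X or are mutually parallel. -/
open Real

/-- `d` is the Hilbert metric of the bounded convex domain `X ⊆ ℝⁿ`: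
`d x x = 0` on `X`, and for distinct `x, y ∈ X`, whenever `x', y'` are the
boundary points of the chord through `x` and `y` with `x', x, y, y'` in this
order, `d x y` is the logarithm of the cross ratio. -/
def IsHilbertMetric {n : ℕ} (X : Set (EuclideanSpace ℝ (Fin n)))
    (d : EuclideanSpace ℝ (Fin n) → EuclideanSpace ℝ (Fin n) → ℝ) : Prop :=
  (∀ x ∈ X, d x x = 0) ∧
  ∀ x ∈ X, ∀ y ∈ X, x ≠ y → ∀ x' ∈ frontier X, ∀ y' ∈ frontier X,
    x ∈ segment ℝ x' y → y ∈ segment ℝ x y' →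
    d x y = Real.log ((dist x y' * dist y x') / (dist x x' * dist y y'))

lemma collinear_of_rel {V : Type*} [AddCommGroup V] [Module ℝ V] (P a b : V) (c : ℝ)
    (h : P = a + c • (b - a)) : Collinear ℝ ({P, a, b} : Set V) := by
  apply (collinear_iff_of_mem (show a ∈ ({P,a,b}:Set V) by simp)).2
  refine ⟨b - a, ?_⟩
  intro x hx
  simp only [Set.mem_insert_iff, Set.mem_singleton_iff] at hx
  rcases hx with rfl | rfl | rfl
  · exact ⟨c, by rw [h, vadd_eq_add]; module⟩
  · exact ⟨0, by rw [vadd_eq_add]; module⟩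
  · exact ⟨1, by rw [vadd_eq_add]; module⟩

set_option maxHeartbeats 2000000 in
theorem hilbert_three_lines_concurrent_or_parallel
    {n : ℕ} (hn : 2 ≤ n) (X : Set (EuclideanSpace ℝ (Fin n)))
    (hne : X.Nonempty) (hconv : Convex ℝ X) (hopen : IsOpen X)
    (hbdd : Bornology.IsBounded X)
    (d : EuclideanSpace ℝ (Fin n) → EuclideanSpace ℝ (Fin n) → ℝ)
    (hd : IsHilbertMetric X d)
    (o : EuclideanSpace ℝ (Fin n)) (ho : o ∈ X)
    (a₁ a₂ a₃ b₁ b₂ b₃ : EuclideanSpace ℝ (Fin n))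
    (ha₂ : a₂ ∈ X) (hb₂ : b₂ ∈ X)
    (hncol : ¬ Collinear ℝ ({o, a₂, b₂} : Set (EuclideanSpace ℝ (Fin n))))
    (hdeq : d o a₂ = d o b₂)
    (ha₁ : a₁ ∈ frontier X) (ha₃ : a₃ ∈ frontier X)
    (hao : o ∈ segment ℝ a₁ a₂) (haa : a₂ ∈ segment ℝ o a₃)
    (hb₁ : b₁ ∈ frontier X) (hb₃ : b₃ ∈ frontier X)
    (hbo : o ∈ segment ℝ b₁ b₂) (hbb : b₂ ∈ segment ℝ o b₃) :
    (∃ p : EuclideanSpace ℝ (Fin n), p ∉ X ∧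
      Collinear ℝ ({p, a₁, b₁} : Set (EuclideanSpace ℝ (Fin n))) ∧
      Collinear ℝ ({p, a₂, b₂} : Set (EuclideanSpace ℝ (Fin n))) ∧
      Collinear ℝ ({p, a₃, b₃} : Set (EuclideanSpace ℝ (Fin n)))) ∨
    ((∃ c : ℝ, b₂ - a₂ = c • (b₁ - a₁)) ∧ (∃ c : ℝ, b₃ - a₃ = c • (b₁ - a₁))) := by
  classical
  -- basic frontier facts
  have hfrX : ∀ z ∈ frontier X, z ∉ X ∧ z ∈ closure X := by
    intro z hz
    rw [hopen.frontier_eq] at hz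
    exact ⟨hz.2, hz.1⟩
  have hoa : o ≠ a₂ := by
    rintro rfl
    refine hncol ?_
    have : ({o, o, b₂} : Set (EuclideanSpace ℝ (Fin n))) = {o, b₂} := by
      simp [Set.insert_comm, Set.pair_comm]
    rw [this]
    exact collinear_pair ℝ o b₂
  have hob : o ≠ b₂ := by
    rintro rfl
    refine hncol ?_
    have : ({o, a₂, o} : Set (EuclideanSpace ℝ (Fin n))) = {o, a₂} := by
      simp [Set.insert_comm, Set.pair_comm]
    rw [this]
    exact collinear_pair ℝ o a₂
  -- extract parameters from segment hypotheses
  have hao' := hao; have haa' := haa; have hbo' := hbo; have hbb' := hbb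
  rw [segment_eq_image'] at hao' haa' hbo' hbb'
  obtain ⟨lam, hlam, hoeq0⟩ := hao'
  obtain ⟨mu, hmu, ha2eq0⟩ := haa'
  obtain ⟨lam', hlam', hoeq'0⟩ := hbo'
  obtain ⟨mu', hmu', hb2eq0⟩ := hbb'
  simp only [Set.mem_Icc] at hlam hmu hlam' hmu'
  have hoeq : o = a₁ + lam • (a₂ - a₁) := hoeq0.symm
  have ha2eq : a₂ = o + mu • (a₃ - o) := ha2eq0.symm
  have hoeq' : o = b₁ + lam' • (b₂ - b₁) := hoeq'0.symm
  have hb2eq : b₂ = o + mu' • (b₃ - o) := hb2eq0.symm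
  clear hoeq0 ha2eq0 hoeq'0 hb2eq0
  -- lam ∈ (0,1)
  have hlam1 : lam ≠ 1 := by
    rintro rfl
    exact hoa (by linear_combination (norm := module) hoeq)
  have hlam0 : lam ≠ 0 := by
    rintro rfl
    have : o = a₁ := by linear_combination (norm := module) hoeq
    exact (hfrX a₁ ha₁).1 (this ▸ ho)
  have hlampos : 0 < lam := lt_of_le_of_ne hlam.1 (Ne.symm hlam0)
  have hlamlt : lam < 1 := lt_of_le_of_ne hlam.2 hlam1
  have hlam1' : (1:ℝ) - lam ≠ 0 := by intro h; apply hlam1; linarith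
  have hlam'1 : lam' ≠ 1 := by
    rintro rfl
    exact hob (by linear_combination (norm := module) hoeq')
  have hlam'0 : lam' ≠ 0 := by
    rintro rfl
    have : o = b₁ := by linear_combination (norm := module) hoeq'
    exact (hfrX b₁ hb₁).1 (this ▸ ho)
  have hlam'pos : 0 < lam' := lt_of_le_of_ne hlam'.1 (Ne.symm hlam'0)
  have hlam'lt : lam' < 1 := lt_of_le_of_ne hlam'.2 hlam'1
  have hlam'1' : (1:ℝ) - lam' ≠ 0 := by intro h; apply hlam'1; linarith
  -- mu ∈ (0,1)
  have hmu0 : mu ≠ 0 := by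
    rintro rfl
    exact hoa (by linear_combination (norm := module) -ha2eq)
  have hmu1 : mu ≠ 1 := by
    rintro rfl
    have : a₂ = a₃ := by linear_combination (norm := module) ha2eq
    exact (hfrX a₃ ha₃).1 (this ▸ ha₂)
  have hmupos : 0 < mu := lt_of_le_of_ne hmu.1 (Ne.symm hmu0)
  have hmult : mu < 1 := lt_of_le_of_ne hmu.2 hmu1
  have hmu'0 : mu' ≠ 0 := by
    rintro rfl
    exact hob (by linear_combination (norm := module) -hb2eq)
  have hmu'1 : mu' ≠ 1 := by
    rintro rfl
    have : b₂ = b₃ := by linear_combination (norm := module) hb2eq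
    exact (hfrX b₃ hb₃).1 (this ▸ hb₂)
  have hmu'pos : 0 < mu' := lt_of_le_of_ne hmu'.1 (Ne.symm hmu'0)
  have hmu'lt : mu' < 1 := lt_of_le_of_ne hmu'.2 hmu'1
  -- coordinates
  obtain ⟨p, hpdef⟩ : ∃ p : ℝ, p = lam / (1 - lam) := ⟨_, rfl⟩
  obtain ⟨q, hqdef⟩ : ∃ q : ℝ, q = lam' / (1 - lam') := ⟨_, rfl⟩
  obtain ⟨t, htdef⟩ : ∃ t : ℝ, t = 1 / mu := ⟨_, rfl⟩
  obtain ⟨t', ht'def⟩ : ∃ t' : ℝ, t' = 1 / mu' := ⟨_, rfl⟩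
  have hp : 0 < p := hpdef ▸ div_pos hlampos (by linarith)
  have hq : 0 < q := hqdef ▸ div_pos hlam'pos (by linarith)
  have ht : 1 < t := by rw [htdef, lt_div_iff₀ hmupos]; linarith
  have ht' : 1 < t' := by rw [ht'def, lt_div_iff₀ hmu'pos]; linarith
  have ha1 : a₁ = o - p • (a₂ - o) := by
    apply smul_right_injective _ hlam1'
    show (1 - lam) • a₁ = (1 - lam) • (o - p • (a₂ - o))
    rw [smul_sub, smul_smul, hpdef, mul_div_cancel₀ _ hlam1']
    linear_combination (norm := module) -hoeq
  have hb1 : b₁ = o - q • (b₂ - o) := by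
    apply smul_right_injective _ hlam'1'
    show (1 - lam') • b₁ = (1 - lam') • (o - q • (b₂ - o))
    rw [smul_sub, smul_smul, hqdef, mul_div_cancel₀ _ hlam'1']
    linear_combination (norm := module) -hoeq'
  have ha3 : a₃ = o + t • (a₂ - o) := by
    apply smul_right_injective _ hmu0
    show mu • a₃ = mu • (o + t • (a₂ - o))
    rw [smul_add, smul_smul, htdef, mul_one_div, div_self hmu0, one_smul]
    linear_combination (norm := module) -ha2eq
  have hb3 : b₃ = o + t' • (b₂ - o) := by
    apply smul_right_injective _ hmu'0
    show mu' • b₃ = mu' • (o + t' • (b₂ - o))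
    rw [smul_add, smul_smul, ht'def, mul_one_div, div_self hmu'0, one_smul]
    linear_combination (norm := module) -hb2eq
  -- norms
  obtain ⟨nu, hnu⟩ : ∃ nu : ℝ, nu = ‖a₂ - o‖ := ⟨_, rfl⟩
  obtain ⟨nv, hnv⟩ : ∃ nv : ℝ, nv = ‖b₂ - o‖ := ⟨_, rfl⟩
  have hnup : 0 < nu := by
    rw [hnu, norm_pos_iff]
    exact fun h => hoa (by linear_combination (norm := module) -h)
  have hnvp : 0 < nv := by
    rw [hnv, norm_pos_iff]
    exact fun h => hob (by linear_combination (norm := module) -h)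
  -- distances along the a-chord
  have da1 : dist o a₁ = p * nu := by
    have h : o - a₁ = p • (a₂ - o) := by rw [ha1]; module
    rw [dist_eq_norm, h, norm_smul, Real.norm_eq_abs, abs_of_pos hp, ← hnu]
  have da2 : dist a₂ a₁ = (1 + p) * nu := by
    have h : a₂ - a₁ = (1 + p) • (a₂ - o) := by rw [ha1]; module
    rw [dist_eq_norm, h, norm_smul, Real.norm_eq_abs, abs_of_pos (by linarith : (0:ℝ) < 1 + p), ← hnu]
  have da3 : dist o a₃ = t * nu := by
    have h : o - a₃ = (-t) • (a₂ - o) := by rw [ha3]; module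
    rw [dist_eq_norm, h, norm_smul, Real.norm_eq_abs, abs_of_neg (by linarith : -t < 0), ← hnu]
    ring_nf
  have da4 : dist a₂ a₃ = (t - 1) * nu := by
    have h : a₂ - a₃ = (1 - t) • (a₂ - o) := by rw [ha3]; module
    rw [dist_eq_norm, h, norm_smul, Real.norm_eq_abs, abs_of_neg (by linarith : 1 - t < 0), ← hnu]
    ring_nf
  have db1 : dist o b₁ = q * nv := by
    have h : o - b₁ = q • (b₂ - o) := by rw [hb1]; module
    rw [dist_eq_norm, h, norm_smul, Real.norm_eq_abs, abs_of_pos hq, ← hnv]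
  have db2 : dist b₂ b₁ = (1 + q) * nv := by
    have h : b₂ - b₁ = (1 + q) • (b₂ - o) := by rw [hb1]; module
    rw [dist_eq_norm, h, norm_smul, Real.norm_eq_abs, abs_of_pos (by linarith : (0:ℝ) < 1 + q), ← hnv]
  have db3 : dist o b₃ = t' * nv := by
    have h : o - b₃ = (-t') • (b₂ - o) := by rw [hb3]; module
    rw [dist_eq_norm, h, norm_smul, Real.norm_eq_abs, abs_of_neg (by linarith : -t' < 0), ← hnv]
    ring_nf
  have db4 : dist b₂ b₃ = (t' - 1) * nv := by
    have h : b₂ - b₃ = (1 - t') • (b₂ - o) := by rw [hb3]; module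
    rw [dist_eq_norm, h, norm_smul, Real.norm_eq_abs, abs_of_neg (by linarith : 1 - t' < 0), ← hnv]
    ring_nf
  -- the cross ratio values
  have htpos : (0:ℝ) < t := by linarith
  have ht'pos : (0:ℝ) < t' := by linarith
  have h1 : (0:ℝ) < t * nu * ((1 + p) * nu) :=
    mul_pos (mul_pos htpos hnup) (mul_pos (by linarith) hnup)
  have h2 : (0:ℝ) < p * nu * ((t - 1) * nu) :=
    mul_pos (mul_pos hp hnup) (mul_pos (by linarith) hnup)
  have h3 : (0:ℝ) < t' * nv * ((1 + q) * nv) :=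
    mul_pos (mul_pos ht'pos hnvp) (mul_pos (by linarith) hnvp)
  have h4 : (0:ℝ) < q * nv * ((t' - 1) * nv) :=
    mul_pos (mul_pos hq hnvp) (mul_pos (by linarith) hnvp)
  have h5 : (0:ℝ) < p * (t - 1) := mul_pos hp (by linarith)
  have h6 : (0:ℝ) < q * (t' - 1) := mul_pos hq (by linarith)
  have hA : d o a₂ = Real.log (t * (1 + p) / (p * (t - 1))) := by
    have h := hd.2 o ho a₂ ha₂ hoa a₁ ha₁ a₃ ha₃ hao haa
    rw [da1, da2, da3, da4] at h
    rw [h]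
    congr 1
    rw [div_eq_div_iff h2.ne' h5.ne']
    ring
  have hB : d o b₂ = Real.log (t' * (1 + q) / (q * (t' - 1))) := by
    have h := hd.2 o ho b₂ hb₂ hob b₁ hb₁ b₃ hb₃ hbo hbb
    rw [db1, db2, db3, db4] at h
    rw [h]
    congr 1
    rw [div_eq_div_iff h4.ne' h6.ne']
    ring
  have hApos : 0 < t * (1 + p) / (p * (t - 1)) :=
    div_pos (mul_pos htpos (by linarith)) h5
  have hBpos : 0 < t' * (1 + q) / (q * (t' - 1)) :=
    div_pos (mul_pos ht'pos (by linarith)) h6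
  have hAB : t * (1 + p) / (p * (t - 1)) = t' * (1 + q) / (q * (t' - 1)) := by
    have hlog : Real.log (t * (1 + p) / (p * (t - 1)))
        = Real.log (t' * (1 + q) / (q * (t' - 1))) := by rw [← hA, ← hB]; exact hdeq
    rw [← Real.exp_log hApos, hlog, Real.exp_log hBpos]
  have key : t * (1 + p) * (q * (t' - 1)) = t' * (1 + q) * (p * (t - 1)) := by
    rw [div_eq_div_iff h5.ne' h6.ne'] at hAB
    linarith [hAB]
  by_cases hpq : p = q
  · -- parallel case
    have htt : t = t' := by
      have h7 : (t - t') * (q * (1 + q)) = 0 := by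
        rw [hpq] at key
        linear_combination -key
      rcases mul_eq_zero.1 h7 with h | h
      · linarith [sub_eq_zero.1 h]
      · exfalso
        have := mul_pos hq (by linarith : (0:ℝ) < 1 + q)
        linarith
    refine Or.inr ⟨⟨-(1/p), ?_⟩, ⟨-(t/p), ?_⟩⟩
    · rw [ha1, hb1, ← hpq]
      match_scalars <;> field_simp <;> try ring <;> try (left; ring)
    · rw [ha3, hb3, ha1, hb1, ← hpq, ← htt]
      match_scalars <;> field_simp <;> try ring <;> try (left; ring)
  · -- concurrent case
    have hr : p - q ≠ 0 := sub_ne_zero.2 hpq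
    obtain ⟨P, hPdef⟩ : ∃ P : EuclideanSpace ℝ (Fin n),
        P = o + ((p * (1 + q)) / (p - q)) • (a₂ - o)
            + (-((q * (1 + p)) / (p - q))) • (b₂ - o) := ⟨_, rfl⟩
    have keyc : p * t' * (1 + q) - q * t * (1 + p) = t * t' * (p - q) := by
      linear_combination key
    have hP1 : P = a₁ + ((1 + p) / (p - q)) • (b₁ - a₁) := by
      rw [hPdef, ha1, hb1]
      match_scalars <;> field_simp <;> try ring <;> try (left; ring)
    have hP2 : P = a₂ + (-(q * (1 + p)) / (p - q)) • (b₂ - a₂) := by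
      rw [hPdef]
      match_scalars <;> field_simp <;> try ring <;> try (left; ring)
    have hP3 : P = a₃ + (-(q * (1 + p)) / ((p - q) * t')) • (b₃ - a₃) := by
      have ht'0 : t' ≠ 0 := by linarith
      rw [hPdef, ha3, hb3]
      match_scalars
      · field_simp
        linear_combination (-1) * keyc
      · field_simp
        linear_combination keyc
      · field_simp
    have hPX : P ∉ X := by
      intro hPX
      have hPint : P ∈ interior X := by rwa [hopen.interior_eq]
      rcases lt_or_gt_of_ne hr with hrneg | hrpos
      · -- p - q < 0 : a₁ would be an interior point
        obtain ⟨g, hgdef⟩ : ∃ g : ℝ, g = (1 + p) / (p - q) := ⟨_, rfl⟩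
        have hg : g < 0 := by
          rw [hgdef]
          exact div_neg_of_pos_of_neg (by linarith) hrneg
        have hco : (1 / (1 - g)) • P + (-g / (1 - g)) • b₁ = a₁ := by
          rw [hP1, ← hgdef]
          have h1g : (1:ℝ) - g ≠ 0 := by intro h; linarith
          match_scalars <;> field_simp <;> try ring <;> try (left; ring)
        have hmem : a₁ ∈ interior X := by
          rw [← hco]
          exact Convex.combo_interior_closure_mem_interior hconv hPint (hfrX b₁ hb₁).2
            (div_pos one_pos (by linarith)) (le_of_lt (div_pos (by linarith) (by linarith)))
            (by have h1g : (1:ℝ) - g ≠ 0 := by linarith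
                field_simp
                ring)
        exact (hfrX a₁ ha₁).1 (by rwa [hopen.interior_eq] at hmem)
      · -- p - q > 0 : b₁ would be an interior point
        obtain ⟨g, hgdef⟩ : ∃ g : ℝ, g = (1 + p) / (p - q) := ⟨_, rfl⟩
        have hg : 1 < g := by
          rw [hgdef, lt_div_iff₀ hrpos]
          linarith
        have hg0 : 0 < g := by linarith
        have hco : (1 / g) • P + (1 - 1 / g) • a₁ = b₁ := by
          rw [hP1, ← hgdef]
          have hgne : g ≠ 0 := by linarith
          match_scalars <;> field_simp <;> try ring <;> try (left; ring)
        have hmem : b₁ ∈ interior X := by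
          rw [← hco]
          refine Convex.combo_interior_closure_mem_interior hconv hPint (hfrX a₁ ha₁).2
            (div_pos one_pos hg0) ?_
            (by have hgne : g ≠ 0 := by linarith
                field_simp
                ring)
          have h1 : 1 / g < 1 := by rw [div_lt_one hg0]; linarith
          linarith
        exact (hfrX b₁ hb₁).1 (by rwa [hopen.interior_eq] at hmem)
    exact Or.inl ⟨P, hPX, collinear_of_rel _ _ _ _ hP1, collinear_of_rel _ _ _ _ hP2,
      collinear_of_rel _ _ _ _ hP3⟩
end

section
/- Invariance of the cross ratio under perspective projection: let a₁, a₂, a₃, a₄ be distinct collinear points in ℝⁿ and b₁, b₂, b₃, b₄ distinct collinear points in ℝⁿ. Suppose there is a point p ∈ ℝⁿ such that for each i, the points p, aᵢ, bᵢ are collinear (with p not on the line of the aᵢ's nor on the line of the bᵢ's). Then (|a₂a₄||a₃a₁|)/(|a₂a₁||a₃a₄|) = (|b₂b₄||b₃b₁|)/(|b₂b₁||b₃b₄|). -/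
open RealInnerProductSpace

lemma cr_abs {t1 t3 t2 t0 s1 s3 s2 s0 nu nv : ℝ} (hnu : 0 < nu) (hnv : 0 < nv)
    (h10 : t1 ≠ t0) (h23 : t2 ≠ t3) (g10 : s1 ≠ s0) (g23 : s2 ≠ s3)
    (hX : (s1-s3)*(s2-s0)*((t1-t0)*(t2-t3)) = (t1-t3)*(t2-t0)*((s1-s0)*(s2-s3))) :
    (|t1 - t3| * nu * (|t2 - t0| * nu)) / ((|t1 - t0| * nu) * (|t2 - t3| * nu))
      = (|s1 - s3| * nv * (|s2 - s0| * nv)) / ((|s1 - s0| * nv) * (|s2 - s3| * nv)) := by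
  have p1 : (0:ℝ) < |t1 - t0| := abs_pos.2 (sub_ne_zero.2 h10)
  have p2 : (0:ℝ) < |t2 - t3| := abs_pos.2 (sub_ne_zero.2 h23)
  have p3 : (0:ℝ) < |s1 - s0| := abs_pos.2 (sub_ne_zero.2 g10)
  have p4 : (0:ℝ) < |s2 - s3| := abs_pos.2 (sub_ne_zero.2 g23)
  rw [div_eq_div_iff (by positivity) (by positivity)]
  have habs := congrArg (fun x => |x|) hX
  simp only [abs_mul] at habs
  linear_combination (-(nu^2*nv^2)) * habs

theorem cross_ratio_perspective_invariance
    {n : ℕ} (p : EuclideanSpace ℝ (Fin n))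
    (a b : Fin 4 → EuclideanSpace ℝ (Fin n))
    (ha_inj : Function.Injective a) (hb_inj : Function.Injective b)
    (ha_col : Collinear ℝ (Set.range a)) (hb_col : Collinear ℝ (Set.range b))
    (hp : ∀ i : Fin 4, Collinear ℝ ({p, a i, b i} : Set (EuclideanSpace ℝ (Fin n))))
    (hpa : ¬ Collinear ℝ (insert p (Set.range a)))
    (hpb : ¬ Collinear ℝ (insert p (Set.range b))) :
    (dist (a 1) (a 3) * dist (a 2) (a 0)) / (dist (a 1) (a 0) * dist (a 2) (a 3)) =
    (dist (b 1) (b 3) * dist (b 2) (b 0)) / (dist (b 1) (b 0) * dist (b 2) (b 3)) := by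
  classical
  obtain ⟨q, u, hqu⟩ := (collinear_iff_exists_forall_eq_smul_vadd _).1 ha_col
  choose t ht using fun i => hqu (a i) (Set.mem_range_self i)
  simp only [vadd_eq_add] at ht
  obtain ⟨r, v, hrv⟩ := (collinear_iff_exists_forall_eq_smul_vadd _).1 hb_col
  choose s hs using fun i => hrv (b i) (Set.mem_range_self i)
  simp only [vadd_eq_add] at hs
  -- p is off both lines
  have hpa' : ∀ x : ℝ, p ≠ x • u + q := by
    intro x hx
    apply hpa
    rw [collinear_iff_exists_forall_eq_smul_vadd]
    refine ⟨q, u, ?_⟩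
    rintro z hz
    rcases hz with rfl | ⟨i, rfl⟩
    · exact ⟨x, by simp [hx]⟩
    · exact ⟨t i, by simp [ht i]⟩
  have hpb' : ∀ x : ℝ, p ≠ x • v + r := by
    intro x hx
    apply hpb
    rw [collinear_iff_exists_forall_eq_smul_vadd]
    refine ⟨r, v, ?_⟩
    rintro z hz
    rcases hz with rfl | ⟨i, rfl⟩
    · exact ⟨x, by simp [hx]⟩
    · exact ⟨s i, by simp [hs i]⟩
  have hap : ∀ i, a i ≠ p := fun i h => hpa' (t i) (by rw [← ht i, h])
  have hbp : ∀ i, b i ≠ p := fun i h => hpb' (s i) (by rw [← hs i, h])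
  have htinj : ∀ i j : Fin 4, i ≠ j → t i ≠ t j := by
    intro i j hij h
    exact hij (ha_inj (by rw [ht i, ht j, h]))
  have hsinj : ∀ i j : Fin 4, i ≠ j → s i ≠ s j := by
    intro i j hij h
    exact hij (hb_inj (by rw [hs i, hs j, h]))
  have hu : u ≠ 0 := by
    intro h
    apply ha_inj.ne (show (0:Fin 4) ≠ 1 by decide)
    rw [ht 0, ht 1, h]
    simp
  have hv : v ≠ 0 := by
    intro h
    apply hb_inj.ne (show (0:Fin 4) ≠ 1 by decide)
    rw [hs 0, hs 1, h]
    simp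
  -- projection scalars
  have hmu : ∀ i, ∃ μ : ℝ, μ ≠ 0 ∧ b i - p = μ • (a i - p) := by
    intro i
    obtain ⟨w, hw⟩ := (collinear_iff_of_mem (Set.mem_insert p _)).1 (hp i)
    obtain ⟨α, hα⟩ := hw (a i) (by simp)
    obtain ⟨β, hβ⟩ := hw (b i) (by simp)
    simp only [vadd_eq_add] at hα hβ
    have hα0 : α ≠ 0 := by
      intro h
      apply hap i
      rw [hα, h]; simp
    have hβ0 : β ≠ 0 := by
      intro h
      apply hbp i
      rw [hβ, h]; simp
    refine ⟨β / α, div_ne_zero hβ0 hα0, ?_⟩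
    rw [hα, hβ]
    simp only [add_sub_cancel_right, smul_smul]
    rw [div_mul_cancel₀ _ hα0]
  choose μ hμ0 hμB using hmu
  -- the auxiliary functional w0
  have hVpos : (⟪v, v⟫ : ℝ) ≠ 0 := inner_self_ne_zero.2 hv
  set r' : EuclideanSpace ℝ (Fin n) := r - p with hr'
  set q' : EuclideanSpace ℝ (Fin n) := q - p with hq'
  set w0 : EuclideanSpace ℝ (Fin n) := r' - (⟪v, r'⟫ / ⟪v, v⟫) • v with hw0def
  have hw0 : w0 ≠ 0 := by
    intro h
    apply hpb' (-(⟪v, r'⟫ / ⟪v, v⟫))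
    have hr : r' = (⟪v, r'⟫ / ⟪v, v⟫) • v := by
      have := sub_eq_zero.1 h
      exact this
    rw [neg_smul, ← hr]
    rw [hr']
    abel
  have hgv : ⟪w0, v⟫ = 0 := by
    rw [hw0def, inner_sub_left, real_inner_smul_left,
      div_mul_cancel₀ _ hVpos, real_inner_comm]
    ring
  have hG : ⟪w0, r'⟫ ≠ 0 := by
    have hr : r' = w0 + (⟪v, r'⟫ / ⟪v, v⟫) • v := by
      rw [hw0def]; abel
    rw [hr, inner_add_right, real_inner_smul_right, hgv, mul_zero, add_zero]
    exact inner_self_ne_zero.2 hw0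
  -- vector decompositions
  have hA : ∀ i, a i - p = t i • u + q' := by
    intro i; rw [ht i, hq']; abel
  have hB : ∀ i, b i - p = s i • v + r' := by
    intro i; rw [hs i, hr']; abel
  -- scalar abbreviations
  set V : ℝ := ⟪v, v⟫ with hVdef
  set G : ℝ := ⟪w0, r'⟫ with hGdef
  set cA : ℝ := ⟪w0, q'⟫ with hcAdef
  set dA : ℝ := ⟪w0, u⟫ with hdAdef
  set Qv : ℝ := ⟪v, q'⟫ with hQvdef
  set Uv : ℝ := ⟪v, u⟫ with hUvdef
  set Rv : ℝ := ⟪v, r'⟫ with hRvdef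
  have hgA : ∀ i, ⟪w0, a i - p⟫ = cA + dA * t i := by
    intro i
    rw [hA i, inner_add_right, real_inner_smul_right]
    ring
  have hgB : ∀ i, ⟪w0, b i - p⟫ = G := by
    intro i
    rw [hB i, inner_add_right, real_inner_smul_right, hgv]
    ring
  have hvA : ∀ i, ⟪v, a i - p⟫ = Qv + Uv * t i := by
    intro i
    rw [hA i, inner_add_right, real_inner_smul_right]
    ring
  have hvB : ∀ i, ⟪v, b i - p⟫ = s i * V + Rv := by
    intro i
    rw [hB i, inner_add_right, real_inner_smul_right]
  have hμe : ∀ i, μ i * (cA + dA * t i) = G := by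
    intro i
    rw [← hgA i, ← real_inner_smul_right, ← hμB i]
    exact hgB i
  have he0 : ∀ i, cA + dA * t i ≠ 0 := by
    intro i h
    have h2 := hμe i
    rw [h, mul_zero] at h2
    exact hG h2.symm
  have hkey : ∀ i, (s i * V + Rv) * (cA + dA * t i) = G * (Qv + Uv * t i) := by
    intro i
    calc (s i * V + Rv) * (cA + dA * t i) = ⟪v, b i - p⟫ * (cA + dA * t i) := by
          rw [hvB]
      _ = (μ i * ⟪v, a i - p⟫) * (cA + dA * t i) := by
          rw [hμB i, real_inner_smul_right]
      _ = (μ i * (cA + dA * t i)) * ⟪v, a i - p⟫ := by ring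
      _ = G * (Qv + Uv * t i) := by rw [hμe, hvA]
  have hdiff : ∀ i j, (s i - s j) * (V * ((cA + dA * t i) * (cA + dA * t j)))
      = (G * (Uv * cA - Qv * dA)) * (t i - t j) := by
    intro i j
    linear_combination (cA + dA * t j) * hkey i - (cA + dA * t i) * hkey j
  have A1 := congrArg₂ (· * ·) (hdiff 1 3) (hdiff 2 0)
  have A2 := congrArg₂ (· * ·) (hdiff 1 0) (hdiff 2 3)
  have hX : (s 1 - s 3) * (s 2 - s 0) * ((t 1 - t 0) * (t 2 - t 3))
      = (t 1 - t 3) * (t 2 - t 0) * ((s 1 - s 0) * (s 2 - s 3)) := by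
    have hD : (V * ((cA + dA * t 0) * (cA + dA * t 1)))
        * (V * ((cA + dA * t 2) * (cA + dA * t 3))) ≠ 0 := by
      apply mul_ne_zero <;>
        exact mul_ne_zero hVpos (mul_ne_zero (he0 _) (he0 _))
    apply mul_right_cancel₀ hD
    linear_combination ((t 1 - t 0) * (t 2 - t 3)) * A1 - ((t 1 - t 3) * (t 2 - t 0)) * A2
  have hdista : ∀ i j, dist (a i) (a j) = |t i - t j| * ‖u‖ := by
    intro i j
    rw [dist_eq_norm, ht i, ht j]
    have h : t i • u + q - (t j • u + q) = (t i - t j) • u := by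
      rw [sub_smul]; abel
    rw [h, norm_smul, Real.norm_eq_abs]
  have hdistb : ∀ i j, dist (b i) (b j) = |s i - s j| * ‖v‖ := by
    intro i j
    rw [dist_eq_norm, hs i, hs j]
    have h : s i • v + r - (s j • v + r) = (s i - s j) • v := by
      rw [sub_smul]; abel
    rw [h, norm_smul, Real.norm_eq_abs]
  rw [hdista 1 3, hdista 2 0, hdista 1 0, hdista 2 3,
    hdistb 1 3, hdistb 2 0, hdistb 1 0, hdistb 2 3]
  exact cr_abs (norm_pos_iff.2 hu) (norm_pos_iff.2 hv)
    (htinj 1 0 (by decide)) (htinj 2 3 (by decide))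
    (hsinj 1 0 (by decide)) (hsinj 2 3 (by decide)) hX
end
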